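/- arXiv:1506.07248 — 4 statements merged into one kernel-verified Lean document; each statement's English description precedes it below -/
import Mathlib

section
/- The packing chromatic number of the corona P_n ⊙ K_1 equals 2 if n = 1, 3 if n ∈ {2,3}, 4 if 4 ≤ n ≤ 9, and 5 if n ≥ 10. -/
open SimpleGraph

/-- A packing `k`-coloring of a graph: colors in `{1,…,k}`, and distinct vertices
with the same color `i` are at distance greater than `i`. -/
def IsPackingColoring {V : Type*} (G : SimpleGraph V) (k : ℕ) (c : V → ℕ) : Prop :=
  (∀ v, 1 ≤ c v ∧ c v ≤ k) ∧
  ∀ u v : V, u ≠ v → c u = c v → (c u : ℕ∞) < G.edist u v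

/-- The packing chromatic number. -/
noncomputable def packingChromaticNumber {V : Type*} (G : SimpleGraph V) : ℕ :=
  sInf {k | ∃ c, IsPackingColoring G k c}

/-- The generalized corona `G ⊙ pK₁`: add `p` pendant neighbors to each vertex. -/
def genCorona {V : Type*} (G : SimpleGraph V) (p : ℕ) : SimpleGraph (V ⊕ V × Fin p) where
  Adj x y :=
    (∃ u v, x = Sum.inl u ∧ y = Sum.inl v ∧ G.Adj u v) ∨
    (∃ u j, x = Sum.inl u ∧ y = Sum.inr (u, j)) ∨
    (∃ u j, x = Sum.inr (u, j) ∧ y = Sum.inl u)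
  symm := by
    constructor
    rintro x y (⟨u, v, rfl, rfl, h⟩ | ⟨u, j, rfl, rfl⟩ | ⟨u, j, rfl, rfl⟩)
    · exact Or.inl ⟨v, u, rfl, rfl, h.symm⟩
    · exact Or.inr (Or.inr ⟨u, j, rfl, rfl⟩)
    · exact Or.inr (Or.inl ⟨u, j, rfl, rfl⟩)
  loopless := by
    constructor
    rintro x (⟨u, v, rfl, h1, h⟩ | ⟨u, j, rfl, h1⟩ | ⟨u, j, rfl, h1⟩)
    · cases h1; exact G.irrefl h
    · exact absurd h1 (by simp)
    · exact absurd h1 (by simp)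

/-- `A` is an orientation of `G`: each edge gets exactly one direction. -/
def IsOrientation {V : Type*} (G : SimpleGraph V) (A : V → V → Prop) : Prop :=
  (∀ u v, A u v → ¬ A v u) ∧ (∀ u v, G.Adj u v ↔ (A u v ∨ A v u))

/-- Existence of a directed path of length `n` from `u` to `v`. -/
def DPath {V : Type*} (A : V → V → Prop) : ℕ → V → V → Prop
  | 0, u, v => u = v
  | (n+1), u, v => ∃ w, A u w ∧ DPath A n w v

/-- The weak directed distance: length of a shortest directed path joining `u` and `v`
in either direction. -/
noncomputable def wdist {V : Type*} (A : V → V → Prop) (u v : V) : ℕ∞ :=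
  sInf {m : ℕ∞ | ∃ n : ℕ, m = n ∧ (DPath A n u v ∨ DPath A n v u)}

/-- A packing `k`-coloring of a digraph, w.r.t. the weak directed distance. -/
def IsDPackingColoring {V : Type*} (A : V → V → Prop) (k : ℕ) (c : V → ℕ) : Prop :=
  (∀ v, 1 ≤ c v ∧ c v ≤ k) ∧
  ∀ u v : V, u ≠ v → c u = c v → (c u : ℕ∞) < wdist A u v

/-- The packing chromatic number of a digraph. -/
noncomputable def dPackingChromaticNumber {V : Type*} (A : V → V → Prop) : ℕ :=
  sInf {k | ∃ c, IsDPackingColoring A k c}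

/-- A source: no incoming arcs. -/
def IsSource {V : Type*} (A : V → V → Prop) (v : V) : Prop := ∀ u, ¬ A u v

/-- A sink: no outgoing arcs. -/
def IsSink {V : Type*} (A : V → V → Prop) (v : V) : Prop := ∀ u, ¬ A v u

/-!
In `Pₙ ⊙ K₁`, two distinct vertices at positions `i`, `j` along the path and at levels `a`, `b`
(level `0` on the path, level `1` for the pendant vertex) are at distance `|i - j| + a + b`.
A packing coloring is therefore a sequence of columns `(color of the path vertex, color of its
pendant vertex)` subject to constraints between pairs of columns, and it restricts to a packing
coloring of every initial segment of columns. An exhaustive search shows that `1`, `2`, `4` and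
`10` columns admit no such coloring with `1`, `2`, `3` and `4` colors respectively. Conversely,
explicit colorings of `3` columns with `3` colors and `9` columns with `4` colors, and the
`8`-periodic coloring `(1,2) (3,1) (1,2) (4,1) (1,2) (3,1) (1,2) (5,1)` of any number of columns
with `5` colors, give the matching upper bounds.
-/

theorem IsPackingColoring.mono {V : Type*} {G : SimpleGraph V} {k k' : ℕ} {c : V → ℕ}
    (h : IsPackingColoring G k c) (hk : k ≤ k') : IsPackingColoring G k' c :=
  ⟨fun v => ⟨(h.1 v).1, (h.1 v).2.trans hk⟩, h.2⟩

theorem packingChromaticNumber_eq_succ {V : Type*} {G : SimpleGraph V} {k : ℕ}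
    (hcol : ∃ c, IsPackingColoring G (k + 1) c) (hno : ∀ c, ¬ IsPackingColoring G k c) :
    packingChromaticNumber G = k + 1 := by
  refine le_antisymm (Nat.sInf_le hcol) (le_csInf ⟨_, hcol⟩ fun j ⟨c, hc⟩ => ?_)
  by_contra hj
  exact hno c (hc.mono (by omega))

namespace SimpleGraph

variable {V : Type*} {G : SimpleGraph V}

theorem le_add_edist_of_forall_adj {f : V → ℕ∞} (hf : ∀ x y, G.Adj x y → f x ≤ f y + 1)
    (u v : V) : f u ≤ f v + G.edist u v := by
  have walk_bound : ∀ x y (w : G.Walk x y), f x ≤ f y + w.length := by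
    intro x y w
    induction w with
    | nil => simp
    | @cons x z y hadj w ih =>
      calc f x ≤ f z + 1 := hf _ _ hadj
        _ ≤ f y + w.length + 1 := by gcongr
        _ = f y + (w.cons hadj).length := by rw [Walk.length_cons]; push_cast; ring
  by_cases h : G.Reachable u v
  · obtain ⟨w, hw⟩ := h.exists_walk_length_eq_edist
    exact hw ▸ walk_bound u v w
  · simp [edist_eq_top_of_not_reachable h]

theorem edist_eq_one_add_of_forall_adj_iff {x y w : V} (hx : ∀ z, G.Adj x z ↔ z = y)
    (hw : w ≠ x) : G.edist x w = 1 + G.edist y w := by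
  refine le_antisymm ?_ ?_
  · calc G.edist x w ≤ G.edist x y + G.edist y w := G.edist_triangle
      _ = 1 + G.edist y w := by rw [edist_eq_one_iff_adj.2 ((hx y).2 rfl)]
  · by_cases h : G.Reachable x w
    · obtain ⟨p, hp⟩ := h.exists_walk_length_eq_edist
      cases p with
      | nil => exact absurd rfl hw
      | cons hadj p =>
        obtain rfl := (hx _).1 hadj
        rw [← hp, Walk.length_cons, Nat.cast_succ, add_comm]
        gcongr
        exact edist_le p
    · simp [edist_eq_top_of_not_reachable h]

theorem pathGraph_edist {n : ℕ} (i j : Fin n) : (pathGraph n).edist i j = Nat.dist i j := by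
  refine le_antisymm ?_ ?_
  · have hstep : ∀ d (i j : Fin n), (i : ℕ) + d = j → (pathGraph n).edist i j ≤ d := by
      intro d
      induction d with
      | zero => intro i j h; simp [Fin.ext (by omega : (i : ℕ) = j)]
      | succ d ih =>
        intro i j h
        let i' : Fin n := ⟨i + 1, by omega⟩
        calc (pathGraph n).edist i j ≤ (pathGraph n).edist i i' + (pathGraph n).edist i' j :=
              (pathGraph n).edist_triangle
          _ ≤ 1 + d := by
            gcongr
            · exact (edist_eq_one_iff_adj.2 (pathGraph_adj.2 (Or.inl rfl))).le
            · exact ih i' j (by simp only [i']; omega)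
          _ = (d + 1 : ℕ) := by push_cast; ring
    rcases le_total (i : ℕ) j with h | h
    · simpa [Nat.dist, Nat.sub_eq_zero_of_le h] using hstep _ i j (Nat.add_sub_cancel' h)
    · simpa [edist_comm, Nat.dist, Nat.sub_eq_zero_of_le h] using
        hstep _ j i (Nat.add_sub_cancel' h)
  · have hlip : ∀ x y : Fin n, (pathGraph n).Adj x y →
        (Nat.dist x j : ℕ∞) ≤ Nat.dist y j + 1 := by
      intro x y hxy
      rw [pathGraph_adj] at hxy
      norm_cast
      unfold Nat.dist
      omega
    simpa using le_add_edist_of_forall_adj hlip i j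

end SimpleGraph

section Corona

variable {V : Type*} {G : SimpleGraph V} {p : ℕ}

def coronaBase : V ⊕ V × Fin p → V
  | .inl u => u
  | .inr (u, _) => u

def coronaLevel : V ⊕ V × Fin p → ℕ
  | .inl _ => 0
  | .inr _ => 1

theorem coronaLevel_lt_two (x : V ⊕ V × Fin p) : coronaLevel x < 2 := by
  rcases x with _ | _ <;> simp [coronaLevel]

theorem exists_coronaBase_coronaLevel [NeZero p] (u : V) {a : ℕ} (ha : a < 2) :
    ∃ x : V ⊕ V × Fin p, coronaBase x = u ∧ coronaLevel x = a := by
  interval_cases a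
  exacts [⟨.inl u, rfl, rfl⟩, ⟨.inr (u, 0), rfl, rfl⟩]

theorem eq_of_coronaBase_eq_of_coronaLevel_eq {x y : V ⊕ V × Fin 1}
    (hb : coronaBase x = coronaBase y) (hl : coronaLevel x = coronaLevel y) : x = y := by
  rcases x with _ | ⟨_, _⟩ <;> rcases y with _ | ⟨_, _⟩ <;>
    simp_all [coronaBase, coronaLevel, Fin.fin_one_eq_zero]

def coronaInl : G →g genCorona G p := ⟨Sum.inl, fun h => Or.inl ⟨_, _, rfl, rfl, h⟩⟩

theorem genCorona_edist_inl (u v : V) :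
    (genCorona G p).edist (.inl u) (.inl v) = G.edist u v := by
  refine le_antisymm ?_ ?_
  · by_cases h : G.Reachable u v
    · obtain ⟨w, hw⟩ := h.exists_walk_length_eq_edist
      have h := edist_le (w.map (coronaInl (p := p)))
      rwa [Walk.length_map, hw] at h
    · simp [edist_eq_top_of_not_reachable h]
  · have hlip : ∀ x y, (genCorona G p).Adj x y →
        G.edist (coronaBase x) v ≤ G.edist (coronaBase y) v + 1 := by
      rintro x y (⟨a, b, rfl, rfl, hab⟩ | ⟨a, j, rfl, rfl⟩ | ⟨a, j, rfl, rfl⟩)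
      · calc G.edist a v ≤ G.edist a b + G.edist b v := G.edist_triangle
          _ = G.edist b v + 1 := by rw [edist_eq_one_iff_adj.2 hab, add_comm]
      all_goals exact le_self_add
    simpa [coronaBase] using le_add_edist_of_forall_adj hlip (.inl u) (.inl v)

theorem genCorona_edist_inr {u : V} {j : Fin p} {w : V ⊕ V × Fin p} (hw : w ≠ .inr (u, j)) :
    (genCorona G p).edist (.inr (u, j)) w = 1 + (genCorona G p).edist (.inl u) w := by
  refine edist_eq_one_add_of_forall_adj_iff (fun z => ?_) hw
  constructor
  · rintro (⟨_, _, h, -⟩ | ⟨_, _, h, -⟩ | ⟨_, _, h, rfl⟩) <;> simp_all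
  · rintro rfl; exact Or.inr (Or.inr ⟨u, j, rfl, rfl⟩)

theorem genCorona_edist {x y : V ⊕ V × Fin p} (hxy : x ≠ y) :
    (genCorona G p).edist x y =
      G.edist (coronaBase x) (coronaBase y) + coronaLevel x + coronaLevel y := by
  rcases x with u | ⟨u, j⟩ <;> rcases y with v | ⟨v, j'⟩
  · simp [genCorona_edist_inl, coronaBase, coronaLevel]
  · rw [edist_comm, genCorona_edist_inr (by simp), edist_comm, genCorona_edist_inl]
    simp [coronaBase, coronaLevel, add_comm]
  · rw [genCorona_edist_inr (by simp), genCorona_edist_inl]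
    simp [coronaBase, coronaLevel, add_comm]
  · rw [genCorona_edist_inr hxy.symm, edist_comm, genCorona_edist_inr (by simp), edist_comm,
      genCorona_edist_inl]
    simp [coronaBase, coronaLevel]
    ring

end Corona

namespace CoronaPath

variable {n : ℕ}

theorem edist_eq {x y : Fin n ⊕ Fin n × Fin 1} (hxy : x ≠ y) :
    (genCorona (pathGraph n) 1).edist x y =
      (Nat.dist (coronaBase x : Fin n) (coronaBase y : Fin n) + coronaLevel x + coronaLevel y :
        ℕ) := by
  rw [genCorona_edist hxy, pathGraph_edist]
  push_cast
  rfl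

theorem isPackingColoring_iff {k : ℕ} {c : Fin n ⊕ Fin n × Fin 1 → ℕ} :
    IsPackingColoring (genCorona (pathGraph n) 1) k c ↔ (∀ x, 1 ≤ c x ∧ c x ≤ k) ∧
      ∀ x y, x ≠ y → c x = c y →
        c x < Nat.dist (coronaBase x : Fin n) (coronaBase y : Fin n) +
          coronaLevel x + coronaLevel y :=
  and_congr_right' <| forall₂_congr fun _ _ => forall_congr' fun hxy => by
    rw [edist_eq hxy, Nat.cast_lt]

def levelColor (q : ℕ × ℕ) (a : ℕ) : ℕ := if a = 0 then q.1 else q.2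

def ValidColumn (k : ℕ) (q : ℕ × ℕ) : Prop :=
  1 ≤ q.1 ∧ q.1 ≤ k ∧ 1 ≤ q.2 ∧ q.2 ≤ k ∧ q.1 ≠ q.2

def ColumnsCompatible (d : ℕ) (p q : ℕ × ℕ) : Prop :=
  ∀ a < 2, ∀ b < 2, levelColor p a = levelColor q b → levelColor p a < d + a + b

def IsColumnPacking (k n : ℕ) (f : ℕ → ℕ × ℕ) : Prop :=
  (∀ i < n, ValidColumn k (f i)) ∧ ∀ j < n, ∀ i < j, ColumnsCompatible (j - i) (f i) (f j)

instance (k : ℕ) : DecidablePred (ValidColumn k) := fun _ => by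
  unfold ValidColumn; infer_instance

instance (d : ℕ) (p q : ℕ × ℕ) : Decidable (ColumnsCompatible d p q) := by
  unfold ColumnsCompatible; infer_instance

instance (k n : ℕ) (f : ℕ → ℕ × ℕ) : Decidable (IsColumnPacking k n f) := by
  unfold IsColumnPacking; infer_instance

theorem IsColumnPacking.of_le {k m n : ℕ} {f : ℕ → ℕ × ℕ} (h : IsColumnPacking k n f)
    (hmn : m ≤ n) : IsColumnPacking k m f :=
  ⟨fun i hi => h.1 i (by omega), fun j hj => h.2 j (by omega)⟩

def ofColumns (f : ℕ → ℕ × ℕ) (x : Fin n ⊕ Fin n × Fin 1) : ℕ :=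
  levelColor (f (coronaBase x : Fin n)) (coronaLevel x)

@[simp]
theorem ofColumns_inl (f : ℕ → ℕ × ℕ) (i : Fin n) : ofColumns f (.inl i) = (f i).1 := rfl

@[simp]
theorem ofColumns_inr (f : ℕ → ℕ × ℕ) (i : Fin n) (j : Fin 1) :
    ofColumns f (.inr (i, j)) = (f i).2 := rfl

def toColumns (c : Fin n ⊕ Fin n × Fin 1 → ℕ) (i : ℕ) : ℕ × ℕ :=
  if h : i < n then (c (.inl ⟨i, h⟩), c (.inr (⟨i, h⟩, 0))) else (0, 0)

theorem ofColumns_toColumns (c : Fin n ⊕ Fin n × Fin 1 → ℕ) : ofColumns (toColumns c) = c := by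
  ext (i | ⟨i, j⟩) <;> simp [toColumns, Fin.fin_one_eq_zero]

theorem isColumnPacking_of_isPackingColoring_ofColumns {k : ℕ} {f : ℕ → ℕ × ℕ}
    (h : IsPackingColoring (genCorona (pathGraph n) 1) k (ofColumns f)) :
    IsColumnPacking k n f := by
  obtain ⟨hbound, hsep⟩ := isPackingColoring_iff.1 h
  refine ⟨fun i hi => ?_, fun j hj i hij a ha b hb heq => ?_⟩
  · obtain ⟨h0, hk0⟩ := hbound (.inl ⟨i, hi⟩)
    obtain ⟨h1, hk1⟩ := hbound (.inr (⟨i, hi⟩, 0))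
    refine ⟨h0, hk0, h1, hk1, fun h => ?_⟩
    have := hsep (.inl ⟨i, hi⟩) (.inr (⟨i, hi⟩, 0)) (by simp) h
    simp only [ofColumns_inl, coronaBase, coronaLevel, Nat.dist_self] at this h0
    omega
  · obtain ⟨x, hxb, hxl⟩ := exists_coronaBase_coronaLevel (p := 1) (⟨i, by omega⟩ : Fin n) ha
    obtain ⟨y, hyb, hyl⟩ := exists_coronaBase_coronaLevel (p := 1) (⟨j, hj⟩ : Fin n) hb
    have hxy : x ≠ y := by rintro rfl; simp_all [Fin.ext_iff]; omega
    have := hsep x y hxy (by simpa [ofColumns, hxb, hyb, hxl, hyl] using heq)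
    simp only [ofColumns, hxb, hyb, hxl, hyl, Nat.dist] at this
    omega

theorem isPackingColoring_ofColumns {k : ℕ} {f : ℕ → ℕ × ℕ} (hf : IsColumnPacking k n f) :
    IsPackingColoring (genCorona (pathGraph n) 1) k (ofColumns f) := by
  have hsep : ∀ x y : Fin n ⊕ Fin n × Fin 1,
      ((coronaBase x : Fin n) : ℕ) < (coronaBase y : Fin n) → ofColumns f x = ofColumns f y →
        ofColumns f x < Nat.dist (coronaBase x : Fin n) (coronaBase y : Fin n) +
          coronaLevel x + coronaLevel y := by
    intro x y hlt heq
    have := hf.2 _ (coronaBase y : Fin n).isLt _ hlt _ (coronaLevel_lt_two x) _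
      (coronaLevel_lt_two y) heq
    unfold ofColumns Nat.dist
    omega
  refine isPackingColoring_iff.2 ⟨fun x => ?_, fun x y hxy heq => ?_⟩
  · obtain ⟨h1, hk1, h2, hk2, -⟩ := hf.1 _ (coronaBase x : Fin n).isLt
    unfold ofColumns levelColor
    split_ifs <;> omega
  rcases lt_trichotomy ((coronaBase x : Fin n) : ℕ) (coronaBase y : Fin n) with h | h | h
  · exact hsep x y h heq
  · have hb : coronaBase x = coronaBase y := Fin.ext h
    have hl : coronaLevel x ≠ coronaLevel y := fun hl =>
      hxy (eq_of_coronaBase_eq_of_coronaLevel_eq hb hl)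
    have hne := (hf.1 _ (coronaBase x : Fin n).isLt).2.2.2.2
    have hx := coronaLevel_lt_two x
    have hy := coronaLevel_lt_two y
    unfold ofColumns levelColor at heq
    rw [hb] at heq hne
    split_ifs at heq <;> omega
  · rw [Nat.dist_comm, add_right_comm, heq]
    exact hsep y x h heq.symm

theorem exists_isPackingColoring_iff {k : ℕ} :
    (∃ c, IsPackingColoring (genCorona (pathGraph n) 1) k c) ↔ ∃ f, IsColumnPacking k n f :=
  ⟨fun ⟨c, hc⟩ => ⟨toColumns c,
      isColumnPacking_of_isPackingColoring_ofColumns ((ofColumns_toColumns c).symm ▸ hc)⟩,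
    fun ⟨f, hf⟩ => ⟨ofColumns f, isPackingColoring_ofColumns hf⟩⟩

def candidateColumns (k : ℕ) : List (ℕ × ℕ) := List.range' 1 k ×ˢ List.range' 1 k

def recentColumns (f : ℕ → ℕ × ℕ) : ℕ → List (ℕ × ℕ)
  | 0 => []
  | m + 1 => f m :: recentColumns f m

-- Lists of columns are stored most recent first: `l.getD d` lies at distance `d + 1` from a
-- column appended to `l`.
def Fits (k : ℕ) (l : List (ℕ × ℕ)) (q : ℕ × ℕ) : Prop :=
  ValidColumn k q ∧ ∀ d < l.length, ColumnsCompatible (d + 1) (l.getD d (0, 0)) q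

instance (k : ℕ) (l : List (ℕ × ℕ)) : DecidablePred (Fits k l) := fun _ => by
  unfold Fits; infer_instance

def columnPackings (k : ℕ) : ℕ → List (List (ℕ × ℕ))
  | 0 => [[]]
  | m + 1 => (columnPackings k m).flatMap fun l =>
      ((candidateColumns k).filter fun q => Fits k l q).map (· :: l)

theorem length_recentColumns (f : ℕ → ℕ × ℕ) (m : ℕ) : (recentColumns f m).length = m := by
  induction m with
  | zero => rfl
  | succ m ih => simp [recentColumns, ih]

theorem getD_recentColumns (f : ℕ → ℕ × ℕ) {m d : ℕ} (hd : d < m) :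
    (recentColumns f m).getD d (0, 0) = f (m - 1 - d) := by
  induction m generalizing d with
  | zero => omega
  | succ m ih =>
    rcases d with _ | d
    · simp [recentColumns]
    · simp only [recentColumns, List.getD_cons_succ]
      rw [ih (by omega)]
      congr 1
      omega

theorem recentColumns_mem_columnPackings {k m : ℕ} {f : ℕ → ℕ × ℕ} (hf : IsColumnPacking k m f) :
    recentColumns f m ∈ columnPackings k m := by
  induction m with
  | zero => simp [recentColumns, columnPackings]
  | succ m ih =>
    have hvalid := hf.1 m (by omega)
    have hfits : Fits k (recentColumns f m) (f m) := by
      refine ⟨hvalid, fun d hd => ?_⟩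
      rw [length_recentColumns] at hd
      rw [getD_recentColumns f hd]
      have := hf.2 m (by omega) (m - 1 - d) (by omega)
      rwa [show m - (m - 1 - d) = d + 1 by omega] at this
    have hcand : f m ∈ candidateColumns k := by
      obtain ⟨h1, hk1, h2, hk2, -⟩ := hvalid
      rw [candidateColumns, ← Prod.mk.eta (p := f m), List.mem_product, List.mem_range'_1,
        List.mem_range'_1]
      omega
    simp only [columnPackings, recentColumns, List.mem_flatMap, List.mem_map, List.mem_filter,
      decide_eq_true_eq]
    exact ⟨_, ih (hf.of_le (by omega)), f m, ⟨hcand, hfits⟩, rfl⟩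

theorem not_isColumnPacking_of_columnPackings_eq_nil {k m n : ℕ} (h : columnPackings k m = [])
    (hmn : m ≤ n) (f : ℕ → ℕ × ℕ) : ¬ IsColumnPacking k n f := fun hf => by
  simpa [h] using recentColumns_mem_columnPackings (hf.of_le hmn)


theorem columnsCompatible_of_lt {d : ℕ} {p : ℕ × ℕ} (hp : p.1 < d ∧ p.2 < d) (q : ℕ × ℕ) :
    ColumnsCompatible d p q := fun a _ b _ _ => by
  unfold levelColor
  split_ifs <;> omega

def periodicColumns (i : ℕ) : ℕ × ℕ :=
  [(1, 2), (3, 1), (1, 2), (4, 1), (1, 2), (3, 1), (1, 2), (5, 1)].getD (i % 8) (0, 0)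

theorem periodicColumns_mod (i : ℕ) : periodicColumns (i % 8) = periodicColumns i := by
  simp [periodicColumns]

theorem periodicColumns_add_mod (i d : ℕ) :
    periodicColumns (i % 8 + d) = periodicColumns (i + d) := by
  simp [periodicColumns, Nat.add_mod]

theorem isColumnPacking_periodicColumns (n : ℕ) : IsColumnPacking 5 n periodicColumns := by
  have hvalid : ∀ i, ValidColumn 5 (periodicColumns i) := by
    have : ∀ r < 8, ValidColumn 5 (periodicColumns r) := by decide
    exact fun i => periodicColumns_mod i ▸ this _ (Nat.mod_lt _ (by norm_num))
  have hnear : ∀ r < 8, ∀ d < 6, 0 < d →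
      ColumnsCompatible d (periodicColumns r) (periodicColumns (r + d)) := by decide
  refine ⟨fun i _ => hvalid i, fun j _ i hij => ?_⟩
  by_cases hfar : 6 ≤ j - i
  · obtain ⟨-, h1, -, h2, -⟩ := hvalid i
    exact columnsCompatible_of_lt (by omega) _
  · have := hnear (i % 8) (Nat.mod_lt _ (by norm_num)) (j - i) (by omega) (by omega)
    rwa [periodicColumns_add_mod, Nat.add_sub_cancel' hij.le, periodicColumns_mod] at this

theorem packingChromaticNumber_eq_of_columnPackings_eq_nil {k m : ℕ}
    (hcol : ∃ f, IsColumnPacking (k + 1) n f) (hno : columnPackings k m = []) (hmn : m ≤ n) :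
    packingChromaticNumber (genCorona (pathGraph n) 1) = k + 1 :=
  packingChromaticNumber_eq_succ (exists_isPackingColoring_iff.2 hcol) fun c hc =>
    not_isColumnPacking_of_columnPackings_eq_nil hno hmn (toColumns c)
      (isColumnPacking_of_isPackingColoring_ofColumns ((ofColumns_toColumns c).symm ▸ hc))

end CoronaPath

theorem packing_chromatic_corona_path (n : ℕ) :
    (n = 1 → packingChromaticNumber (genCorona (pathGraph n) 1) = 2) ∧
    ((n = 2 ∨ n = 3) → packingChromaticNumber (genCorona (pathGraph n) 1) = 3) ∧
    ((4 ≤ n ∧ n ≤ 9) → packingChromaticNumber (genCorona (pathGraph n) 1) = 4) ∧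
    (10 ≤ n → packingChromaticNumber (genCorona (pathGraph n) 1) = 5) := by
  open CoronaPath in
  · have three : IsColumnPacking 3 3 ([(1, 2), (3, 1), (1, 2)].getD · (0, 0)) := by decide
    have nine : IsColumnPacking 4 9 ([(1, 4), (2, 1), (3, 1), (1, 2), (4, 1), (1, 2), (3, 1),
        (2, 1), (1, 4)].getD · (0, 0)) := by decide
    refine ⟨fun hn => ?_, fun hn => ?_, fun hn => ?_, fun hn => ?_⟩
    · subst hn
      exact packingChromaticNumber_eq_of_columnPackings_eq_nil ⟨fun _ => (1, 2), by decide⟩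
        (m := 1) (by decide) le_rfl
    · exact packingChromaticNumber_eq_of_columnPackings_eq_nil ⟨_, three.of_le (by omega)⟩
        (m := 2) (by decide) (by omega)
    · exact packingChromaticNumber_eq_of_columnPackings_eq_nil ⟨_, nine.of_le hn.2⟩
        (m := 4) (by decide) hn.1
    · exact packingChromaticNumber_eq_of_columnPackings_eq_nil
        ⟨_, isColumnPacking_periodicColumns n⟩ (m := 10) (by decide) hn
end

section
/- Let P_n = x_1…x_n be a path with n ≥ 2 and let p ≥ 1. Any packing coloring π of the generalized corona P_n ⊙ pK_1 with π(x_i) = 1 must use at least p+3 colors if 2 ≤ i ≤ n−1, and at least p+2 colors if i ∈ {1, n}. -/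
open SimpleGraph

/-! If `π x = 1`, any two neighbours of `x` are at distance at most `2` and have colors at least
`2`, so the neighbours of `x` receive pairwise distinct colors in `{2, …, k}`: hence
`deg x + 1 ≤ k`. In `Pₙ ⊙ pK₁` the vertex `xᵢ` has degree `p + 2` in the interior of the path and
degree `p + 1` at its ends. -/

namespace IsPackingColoring

variable {V : Type*} {G : SimpleGraph V} {k : ℕ} {c : V → ℕ}

theorem ne_of_adj (hc : IsPackingColoring G k c) {u v : V} (h : G.Adj u v) : c u ≠ c v := by
  intro heq
  have hlt := hc.2 u v h.ne heq
  rw [edist_eq_one_iff_adj.mpr h] at hlt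
  have hpos := (hc.1 u).1
  norm_cast at hlt
  omega

theorem ne_of_adj_of_adj_of_eq_one (hc : IsPackingColoring G k c) {x u v : V} (hx : c x = 1)
    (hu : G.Adj x u) (hv : G.Adj x v) (huv : u ≠ v) : c u ≠ c v := by
  intro heq
  have hcu : 2 ≤ c u := by
    have := hc.ne_of_adj hu
    have := (hc.1 u).1
    omega
  have hdist : G.edist u v ≤ 2 := by
    simpa using edist_le (hu.symm.toWalk.append hv.toWalk)
  have hlt : ((2 : ℕ) : ℕ∞) < 2 :=
    (Nat.cast_le.mpr hcu).trans_lt ((hc.2 u v huv heq).trans_le hdist)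
  exact lt_irrefl _ hlt

theorem card_add_one_le_of_eq_one (hc : IsPackingColoring G k c) {x : V} (hx : c x = 1)
    (s : Finset V) (hs : ∀ v ∈ s, G.Adj x v) : s.card + 1 ≤ k := by
  have hinj : Set.InjOn c s := fun u hu v hv heq => by
    by_contra huv
    exact hc.ne_of_adj_of_adj_of_eq_one hx (hs u hu) (hs v hv) huv heq
  have hsub : s.image c ⊆ Finset.Icc 2 k := by
    intro a ha
    obtain ⟨v, hv, rfl⟩ := Finset.mem_image.mp ha
    have := hc.ne_of_adj (hs v hv)
    have := hc.1 v
    rw [Finset.mem_Icc]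
    omega
  have hcard := Finset.card_le_card hsub
  rw [Finset.card_image_of_injOn hinj, Nat.card_Icc] at hcard
  have := (hc.1 x).2
  omega

end IsPackingColoring

theorem genCorona_adj_inl_inl {V : Type*} {G : SimpleGraph V} {p : ℕ} {u v : V} :
    (genCorona G p).Adj (Sum.inl u) (Sum.inl v) ↔ G.Adj u v := by
  simp [genCorona]

theorem genCorona_adj_inl_inr {V : Type*} (G : SimpleGraph V) {p : ℕ} (u : V) (j : Fin p) :
    (genCorona G p).Adj (Sum.inl u) (Sum.inr (u, j)) :=
  Or.inr (Or.inl ⟨u, j, rfl, rfl⟩)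

theorem IsPackingColoring.card_add_le_of_genCorona {V : Type*} {G : SimpleGraph V} {p k : ℕ}
    {c : V ⊕ V × Fin p → ℕ} (hc : IsPackingColoring (genCorona G p) k c) {u : V}
    (hu : c (Sum.inl u) = 1) (s : Finset V) (hs : ∀ v ∈ s, G.Adj u v) :
    s.card + p + 1 ≤ k := by
  have := hc.card_add_one_le_of_eq_one hu (s.disjSum ({u} ×ˢ Finset.univ)) <| by
    rintro (v | ⟨w, j⟩) hv
    · exact genCorona_adj_inl_inl.mpr (hs v (Finset.inl_mem_disjSum.mp hv))
    · obtain rfl : u = w := by simpa using hv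
      exact genCorona_adj_inl_inr G u j
  simpa [Finset.card_disjSum, Finset.card_product] using this

theorem exists_pathGraph_adj {n : ℕ} (hn : 2 ≤ n) (i : Fin n) : ∃ j, (pathGraph n).Adj i j := by
  by_cases h : i.val = 0
  · exact ⟨⟨1, by omega⟩, pathGraph_adj.mpr (Or.inl (by simp [h]))⟩
  · exact ⟨⟨i.val - 1, by omega⟩, pathGraph_adj.mpr (Or.inr (by simp; omega))⟩

theorem exists_pathGraph_adj_pair {n : ℕ} (i : Fin n) (h0 : i.val ≠ 0) (h1 : i.val ≠ n - 1) :
    ∃ a b, a ≠ b ∧ (pathGraph n).Adj i a ∧ (pathGraph n).Adj i b := by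
  have := i.isLt
  refine ⟨⟨i.val - 1, by omega⟩, ⟨i.val + 1, by omega⟩, ?_, ?_, ?_⟩
  · simp [Fin.ext_iff]
  · exact pathGraph_adj.mpr (Or.inr (by simp; omega))
  · exact pathGraph_adj.mpr (Or.inl rfl)

theorem packing_coloring_corona_path_color_one_general (n p k : ℕ) (hn : 2 ≤ n)
    (c : Fin n ⊕ Fin n × Fin p → ℕ)
    (hc : IsPackingColoring (genCorona (pathGraph n) p) k c)
    (i : Fin n) (hci : c (Sum.inl i) = 1) :
    ((i.val ≠ 0 ∧ i.val ≠ n - 1) → p + 3 ≤ k) ∧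
    ((i.val = 0 ∨ i.val = n - 1) → p + 2 ≤ k) := by
  constructor
  · rintro ⟨h0, h1⟩
    obtain ⟨a, b, hab, ha, hb⟩ := exists_pathGraph_adj_pair i h0 h1
    have := hc.card_add_le_of_genCorona hci {a, b} (by simp [ha, hb])
    rw [Finset.card_pair hab] at this
    omega
  · intro _
    obtain ⟨a, ha⟩ := exists_pathGraph_adj hn i
    have := hc.card_add_le_of_genCorona hci {a} (by simp [ha])
    rw [Finset.card_singleton] at this
    omega

theorem packing_coloring_corona_path_color_one (n p k : ℕ) (hn : 2 ≤ n) (hp : 1 ≤ p)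
    (c : Fin n ⊕ Fin n × Fin p → ℕ)
    (hc : IsPackingColoring (genCorona (pathGraph n) p) k c)
    (i : Fin n) (hci : c (Sum.inl i) = 1) :
    ((i.val ≠ 0 ∧ i.val ≠ n - 1) → p + 3 ≤ k) ∧
    ((i.val = 0 ∨ i.val = n - 1) → p + 2 ≤ k) :=
  packing_coloring_corona_path_color_one_general n p k hn c hc i hci
end

section
/- For every orientation C⃗_n of the cycle C_n (n ≥ 3), 2 ≤ χρ(C⃗_n) ≤ 4, and χρ(C⃗_n) = 4 if and only if C⃗_n is a directed cycle (all arcs in the same direction), n ≥ 5, and n ≢ 0 (mod 4). -/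
open SimpleGraph

/-!
In an orientation of `C_n` a directed path cannot turn back, so it runs monotonically around the
cycle and the weak directed distance is at least the cyclic distance. Hence the pattern
`1, 2, 1, 3` repeated around the cycle, with one extra color 4 when `4 ∤ n`, is always a packing
coloring. If the orientation is not a directed cycle it has a source, through which no directed
path passes: cut there, the cycle becomes a path, which has a packing 3-coloring giving its two ends
the same color. In a directed cycle, on the other hand, a packing 3-coloring must put a 3 in every
four consecutive vertices, so the 3s recur with period exactly 4, which fails when `4 ∤ n`.
-/

open Fin.CommRing

section Digraph

variable {V : Type*} {A : V → V → Prop} {k : ℕ} {c : V → ℕ}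

theorem wdist_le_of_dpath {m : ℕ} {u v : V} (h : DPath A m u v) : wdist A u v ≤ m :=
  sInf_le ⟨m, rfl, Or.inl h⟩

theorem IsDPackingColoring.lt_of_dpath (hc : IsDPackingColoring A k c) {u v : V} {m : ℕ}
    (huv : u ≠ v) (hcc : c u = c v) (h : DPath A m u v) : c u < m := by
  exact_mod_cast (hc.2 u v huv hcc).trans_le (wdist_le_of_dpath h)

theorem isDPackingColoring_of_dpath (hb : ∀ v, 1 ≤ c v ∧ c v ≤ k)
    (h : ∀ u v m, u ≠ v → c u = c v → DPath A m u v → c u < m) :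
    IsDPackingColoring A k c := by
  refine ⟨hb, fun u v huv hcc => ?_⟩
  have hle : ((c u + 1 : ℕ) : ℕ∞) ≤ wdist A u v := by
    refine le_sInf ?_
    rintro _ ⟨m, rfl, hp | hp⟩
    · exact_mod_cast h u v m huv hcc hp
    · exact_mod_cast hcc ▸ h v u m huv.symm hcc.symm hp
  exact lt_of_lt_of_le (by exact_mod_cast Nat.lt_succ_self _) hle

theorem IsDPackingColoring.mono {k' : ℕ} (hc : IsDPackingColoring A k c) (hk : k ≤ k') :
    IsDPackingColoring A k' c :=
  ⟨fun v => ⟨(hc.1 v).1, (hc.1 v).2.trans hk⟩, hc.2⟩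

theorem dPackingChromaticNumber_eq_succ_iff (h : ∃ c, IsDPackingColoring A (k + 1) c) :
    dPackingChromaticNumber A = k + 1 ↔ ¬ ∃ c, IsDPackingColoring A k c := by
  have hle : dPackingChromaticNumber A ≤ k + 1 := Nat.sInf_le h
  obtain ⟨c, hc⟩ : ∃ c, IsDPackingColoring A (dPackingChromaticNumber A) c :=
    Nat.sInf_mem (s := {k | ∃ c, IsDPackingColoring A k c}) ⟨k + 1, h⟩
  constructor
  · rintro heq ⟨c', hc'⟩
    have : dPackingChromaticNumber A ≤ k := Nat.sInf_le ⟨c', hc'⟩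
    omega
  · intro hk
    by_contra hne
    exact hk ⟨c, hc.mono (by omega)⟩

theorem IsOrientation.two_le_dPackingChromaticNumber {G : SimpleGraph V}
    (hA : IsOrientation G A) {u v : V} (hG : G.Adj u v) (h : ∃ k c, IsDPackingColoring A k c) :
    2 ≤ dPackingChromaticNumber A := by
  obtain ⟨c, hc⟩ : ∃ c, IsDPackingColoring A (dPackingChromaticNumber A) c := Nat.sInf_mem h
  obtain ⟨hu1, hu2⟩ := hc.1 u
  obtain ⟨hv1, hv2⟩ := hc.1 v
  by_contra hk
  rcases (hA.2 u v).1 hG with huv | hvu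
  · have := hc.lt_of_dpath (m := 1) hG.ne (by omega) ⟨v, huv, rfl⟩
    omega
  · have := hc.lt_of_dpath (m := 1) hG.ne.symm (by omega) ⟨u, hvu, rfl⟩
    omega

end Digraph

section CyclicPacking

variable {n : ℕ}

/-- Quantified over both orders of `u` and `v`, this bounds the common color by the cyclic
distance `min (v - u).val (u - v).val`. -/
def IsCyclicPacking (c : Fin n → ℕ) : Prop :=
  ∀ u v, u ≠ v → c u = c v → c u < (v - u).val

theorem isCyclicPacking_of_lt {g : ℕ → ℕ}
    (hg : ∀ a b, a < b → b < n → g a = g b → g a < b - a ∧ g a < n - (b - a)) :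
    IsCyclicPacking (fun v : Fin n => g v.val) := by
  intro u v huv hcc
  dsimp only at hcc ⊢
  rcases lt_or_gt_of_ne (Fin.val_ne_of_ne huv) with h | h
  · rw [Fin.coe_sub_iff_le.2 h.le]
    exact (hg _ _ h v.isLt hcc).1
  · rw [Fin.coe_sub_iff_lt.2 h]
    have := (hg _ _ h u.isLt hcc.symm).2
    omega

theorem isCyclicPacking_of_injective {c : Fin n → ℕ} (hc : Function.Injective c) :
    IsCyclicPacking c :=
  fun _ _ huv hcc => absurd (hc hcc) huv

end CyclicPacking

section Cycle

variable {n : ℕ} [NeZero n] {A : Fin n → Fin n → Prop}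

theorem eq_add_one_or_eq_sub_one_of_cycleGraph_adj {u w : Fin n}
    (h : (cycleGraph n).Adj u w) : w = u + 1 ∨ w = u - 1 := by
  have val_one (x : Fin n) (hx : x.val = 1) : x = 1 := by
    have := x.isLt
    exact Fin.ext (by rw [hx, Fin.val_one', Nat.mod_eq_of_lt (by omega)])
  rcases cycleGraph_adj'.1 h with h | h
  · right; rw [← val_one _ h, sub_sub_cancel]
  · left; rw [← val_one _ h, add_sub_cancel]

theorem cycleGraph_adj_add_one (hn : 2 ≤ n) (i : Fin n) : (cycleGraph n).Adj i (i + 1) :=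
  cycleGraph_adj'.2 (Or.inr (by rw [add_sub_cancel_left, Fin.val_one', Nat.mod_eq_of_lt hn]))

/-- A directed run of length `m` from `u` in the direction `ε` (meant to be `±1`). -/
def IsRun (A : Fin n → Fin n → Prop) (u ε : Fin n) (m : ℕ) : Prop :=
  ∀ j < m, A (u + j * ε) (u + j * ε + ε)

theorem dpath_of_isRun {u ε : Fin n} {m : ℕ} (h : IsRun A u ε m) :
    DPath A m u (u + m * ε) := by
  induction m generalizing u with
  | zero => simp [DPath]
  | succ m ih =>
    refine ⟨u + ε, by simpa using h 0 (by omega), ?_⟩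
    have hrun : IsRun A (u + ε) ε m := fun j hj => by
      rw [show u + ε + j * ε = u + ((j + 1 : ℕ) : Fin n) * ε by push_cast; ring]
      exact h (j + 1) (by omega)
    rw [show u + ((m + 1 : ℕ) : Fin n) * ε = u + ε + m * ε by push_cast; ring]
    exact ih hrun

theorem exists_isRun_of_dpath (hA : IsOrientation (cycleGraph n) A) {u v : Fin n} {m : ℕ}
    (h : DPath A m u v) :
    ∃ ε : Fin n, (ε = 1 ∨ ε = -1) ∧ IsRun A u ε m ∧ v = u + m * ε := by
  induction m generalizing u with
  | zero => exact ⟨1, Or.inl rfl, fun j hj => absurd hj j.not_lt_zero, by simpa using h.symm⟩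
  | succ m ih =>
    obtain ⟨w, huw, hw⟩ := h
    obtain ⟨ε, hε, hrun, rfl⟩ := ih hw
    have hε₀ : w - u = 1 ∨ w - u = -1 := by
      rcases eq_add_one_or_eq_sub_one_of_cycleGraph_adj ((hA.2 u w).2 (Or.inl huw)) with h | h
      · left; rw [h]; ring
      · right; rw [h]; ring
    rcases Nat.eq_zero_or_pos m with rfl | hm
    · refine ⟨w - u, hε₀, fun j hj => ?_, by simp⟩
      obtain rfl : j = 0 := by omega
      simpa using huw
    -- a run that turned back at `w` would contain the arc `w → u` opposite to `u → w`
    have hεw : ε = w - u := by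
      have hback : w + ε ≠ u := fun he => hA.1 u w huw (by simpa [he] using hrun 0 hm)
      rcases hε with rfl | rfl <;> rcases hε₀ with h | h <;> grind
    subst hεw
    refine ⟨w - u, hε₀, fun j hj => ?_, by push_cast; ring⟩
    rcases j with _ | j
    · simpa using huw
    · rw [show u + ((j + 1 : ℕ) : Fin n) * (w - u) = w + j * (w - u) by push_cast; ring]
      exact hrun j (by omega)

theorem IsCyclicPacking.isDPackingColoring (hA : IsOrientation (cycleGraph n) A) {k : ℕ}
    {c : Fin n → ℕ} (hb : ∀ v, 1 ≤ c v ∧ c v ≤ k) (hc : IsCyclicPacking c) :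
    IsDPackingColoring A k c := by
  refine isDPackingColoring_of_dpath hb fun u v m huv hcc hp => ?_
  obtain ⟨ε, rfl | rfl, -, rfl⟩ := exists_isRun_of_dpath hA hp
  · have := hc _ _ huv hcc
    rw [mul_one, add_sub_cancel_left, Fin.val_natCast] at this
    exact this.trans_le (Nat.mod_le m n)
  · have := hc _ _ huv.symm hcc.symm
    rw [mul_neg_one, ← sub_eq_add_neg] at this hcc
    rw [sub_sub_cancel, Fin.val_natCast, ← hcc] at this
    exact this.trans_le (Nat.mod_le m n)

theorem IsDPackingColoring.isCyclicPacking {k : ℕ} {c : Fin n → ℕ}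
    (hdir : (∀ i : Fin n, A i (i + 1)) ∨ (∀ i : Fin n, A (i + 1) i))
    (hc : IsDPackingColoring A k c) : IsCyclicPacking c := by
  intro u v huv hcc
  rcases hdir with hfwd | hbwd
  · have hp := dpath_of_isRun (A := A) (u := u) (ε := 1) (m := (v - u).val) fun j _ => hfwd _
    rw [Fin.cast_val_eq_self, mul_one, add_sub_cancel] at hp
    exact hc.lt_of_dpath huv hcc hp
  · have hp := dpath_of_isRun (A := A) (u := v) (ε := -1) (m := (v - u).val) fun j _ => by
      simpa [← sub_eq_add_neg] using hbwd (v - j - 1)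
    rw [Fin.cast_val_eq_self, mul_neg_one, ← sub_eq_add_neg, sub_sub_cancel] at hp
    exact hcc ▸ hc.lt_of_dpath huv.symm hcc.symm hp

theorem val_add_natCast_of_lt {z : Fin n} {m : ℕ} (h : z.val + m < n) :
    (z + m).val = z.val + m := by
  rw [Fin.val_add, Fin.val_natCast, Nat.add_mod_mod, Nat.mod_eq_of_lt h]

theorem IsRun.val_add_lt_of_isSource {s x ε : Fin n} {m : ℕ} (hs : IsSource A s)
    (hε : ε * ε = 1) (h : IsRun A x ε m) : (ε * (x - s)).val + m < n := by
  by_contra hlt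
  set q := (ε * (x - s)).val with hq
  have hqn : q < n := (ε * (x - s)).isLt
  -- step `n - q - 1` of the run would end at the source `s`
  have hcast : ((n - q - 1 : ℕ) : Fin n) + 1 = -(ε * (x - s)) := by
    rw [← Nat.cast_add_one, show n - q - 1 + 1 = n - q by omega, Nat.cast_sub hqn.le,
      Fin.natCast_self, hq, Fin.cast_val_eq_self, zero_sub]
  have hend : x + ((n - q - 1 : ℕ) : Fin n) * ε + ε = s := by
    linear_combination ε * hcast + (s - x) * hε
  exact hs _ (hend ▸ h _ (by omega))

theorem apply_val_sub_eq {f : ℕ → ℕ} (hf : f n = f 0) (x s : Fin n) :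
    f (x - s).val = f (n - (s - x).val) := by
  by_cases hxs : x = s
  · simp [hxs, hf]
  · rw [← neg_sub x s, Fin.val_neg, if_neg (sub_ne_zero.2 hxs)]
    have := (x - s).isLt
    congr 1
    omega

/-- Cutting the cycle open at a source `s` turns it into the path `0, 1, …, n` of positions
`(v - s).val`, with `s` at both ends: no directed path can pass through a source. -/
theorem IsSource.isDPackingColoring (hA : IsOrientation (cycleGraph n) A) {s : Fin n}
    (hs : IsSource A s) {k : ℕ} {f : ℕ → ℕ} (hb : ∀ t, 1 ≤ f t ∧ f t ≤ k)
    (hf : ∀ a b, a < b → b ≤ n → f a = f b → f a < b - a) (hwrap : f n = f 0) :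
    IsDPackingColoring A k (fun v => f (v - s).val) := by
  refine isDPackingColoring_of_dpath (fun v => hb _) fun u v m huv hcc hp => ?_
  obtain ⟨ε, hε, hrun, rfl⟩ := exists_isRun_of_dpath hA hp
  have hεε : ε * ε = 1 := by rcases hε with rfl | rfl <;> ring
  have hlt := hrun.val_add_lt_of_isSource hs hεε
  have hpos : (ε * (u + m * ε - s)).val = (ε * (u - s)).val + m := by
    rw [show ε * (u + m * ε - s) = ε * (u - s) + m by linear_combination (m : Fin n) * hεε]
    exact val_add_natCast_of_lt hlt
  have hm : 0 < m := Nat.pos_of_ne_zero (by rintro rfl; simp at huv)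
  rcases hε with rfl | rfl
  · simp only [one_mul] at hpos hlt
    have := hf _ _ (by omega) (by omega) (hpos ▸ hcc)
    omega
  · simp only [neg_one_mul, neg_sub] at hpos hlt
    simp only [apply_val_sub_eq hwrap] at hcc ⊢
    have := hf _ _ (by omega) (by omega) hcc.symm
    omega

end Cycle

theorem exists_four_mul_mod_eq_two {n : ℕ} (hn : 3 ≤ n) (h4 : n % 4 ≠ 0) :
    ∃ k, 4 * k % n = 2 := by
  rcases Nat.even_or_odd n with ⟨r, hr⟩ | ⟨r, hr⟩
  · refine ⟨(n + 2) / 4, ?_⟩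
    rw [show 4 * ((n + 2) / 4) = n * 1 + 2 by omega, Nat.mul_add_mod, Nat.mod_eq_of_lt (by omega)]
  · refine ⟨r + 1, ?_⟩
    rw [show 4 * (r + 1) = n * 2 + 2 by omega, Nat.mul_add_mod, Nat.mod_eq_of_lt (by omega)]

section ThreeColors

variable {n : ℕ} [NeZero n] {c : Fin n → ℕ}

theorem IsCyclicPacking.lt_sub_of_eq (hc : IsCyclicPacking c) (w : Fin n) {i j : ℕ}
    (hij : i < j) (hjn : j < n) (h : c (w + i) = c (w + j)) : c (w + i) < j - i := by
  have hval : (w + j - (w + i)).val = j - i := by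
    rw [show w + j - (w + i) = ((j - i : ℕ) : Fin n) by push_cast [hij.le]; ring,
      Fin.val_natCast, Nat.mod_eq_of_lt (by omega)]
  have hne : w + i ≠ w + j := fun he => by
    rw [he, sub_self, Fin.val_zero] at hval
    omega
  exact hval ▸ hc _ _ hne h

variable (hb : ∀ v, 1 ≤ c v ∧ c v ≤ 3) (hc : IsCyclicPacking c)
include hb hc

/-- Two colors cannot fill four consecutive vertices: the 1s are not adjacent and the 2s are at
least 3 apart. -/
theorem IsCyclicPacking.exists_eq_three (hn : 4 ≤ n) (w : Fin n) :
    ∃ j : ℕ, j < 4 ∧ c (w + j) = 3 := by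
  by_contra! h
  have h01 := hc.lt_sub_of_eq w (i := 0) (j := 1) (by omega) (by omega)
  have h12 := hc.lt_sub_of_eq w (i := 1) (j := 2) (by omega) (by omega)
  have h23 := hc.lt_sub_of_eq w (i := 2) (j := 3) (by omega) (by omega)
  have h02 := hc.lt_sub_of_eq w (i := 0) (j := 2) (by omega) (by omega)
  have h13 := hc.lt_sub_of_eq w (i := 1) (j := 3) (by omega) (by omega)
  have := h 0 (by omega); have := h 1 (by omega); have := h 2 (by omega); have := h 3 (by omega)
  have := hb (w + (0 : ℕ)); have := hb (w + (1 : ℕ)); have := hb (w + (2 : ℕ))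
  have := hb (w + (3 : ℕ))
  omega

theorem IsCyclicPacking.eq_three_add_four (hn : 5 ≤ n) {x : Fin n} (hx : c x = 3) :
    c (x + (4 : ℕ)) = 3 := by
  obtain ⟨j, hj, h3⟩ := hc.exists_eq_three hb (by omega) (x + 1)
  have hshift : x + 1 + j = x + ((j + 1 : ℕ) : Fin n) := by push_cast; ring
  rw [hshift] at h3
  have h0 : c (x + ((0 : ℕ) : Fin n)) = 3 := by simpa using hx
  obtain rfl : j = 3 := by
    by_contra hj3
    have := hc.lt_sub_of_eq x (i := 0) (j := j + 1) (by omega) (by omega) (h0.trans h3.symm)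
    omega
  simpa using h3

theorem IsCyclicPacking.eq_three_add_four_mul (hn : 5 ≤ n) {x : Fin n} (hx : c x = 3) (k : ℕ) :
    c (x + (4 * k : ℕ)) = 3 := by
  induction k with
  | zero => simpa using hx
  | succ k ih =>
    rw [show x + ((4 * (k + 1) : ℕ) : Fin n) = x + ((4 * k : ℕ) : Fin n) + (4 : ℕ) by
      push_cast; ring]
    exact hc.eq_three_add_four hb hn ih

/-- The 3s recur with period exactly 4, which is impossible around a cycle of length `n ≢ 0`
(mod 4), since `4k ≡ 2 (mod n)` for some `k`. -/
theorem IsCyclicPacking.false_of_le_three (hn : 5 ≤ n) (h4 : n % 4 ≠ 0) : False := by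
  obtain ⟨j, -, hx⟩ := hc.exists_eq_three hb (by omega) 0
  obtain ⟨k, hk⟩ := exists_four_mul_mod_eq_two (by omega) h4
  have h2 := hc.eq_three_add_four_mul hb hn hx k
  rw [show ((4 * k : ℕ) : Fin n) = ((2 : ℕ) : Fin n) from
    Fin.ext (by rw [Fin.val_natCast, Fin.val_natCast, hk, Nat.mod_eq_of_lt (by omega)])] at h2
  have h0 : c (0 + j + ((0 : ℕ) : Fin n)) = 3 := by simpa using hx
  have := hc.lt_sub_of_eq (0 + j) (i := 0) (j := 2) (by omega) (by omega) (h0.trans h2.symm)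
  omega

end ThreeColors

def blockPattern (t : ℕ) : ℕ := if t % 2 = 0 then 1 else if t % 4 = 1 then 2 else 3

/-- The pattern `1, 2, 1, 3` repeated around a cycle of length `n`; when `4 ∤ n` it does not close
up, and the last vertex gets the color 4. -/
def cyclePattern (n t : ℕ) : ℕ := if n % 4 ≠ 0 ∧ t = n - 1 then 4 else blockPattern t

def cutPattern (n t : ℕ) : ℕ :=
  if n % 2 = 0 then blockPattern t
  else if n % 4 = 1 then (if t = n - 1 then 2 else if t = n then 1 else blockPattern t)
  else if t < 3 then t + 1 else blockPattern (t - 3)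

theorem cyclePattern_bounds (n t : ℕ) : 1 ≤ cyclePattern n t ∧ cyclePattern n t ≤ 4 := by
  unfold cyclePattern blockPattern
  split_ifs <;> omega

theorem cyclePattern_le_three {n : ℕ} (hn : n % 4 = 0) (t : ℕ) : cyclePattern n t ≤ 3 := by
  unfold cyclePattern blockPattern
  split_ifs <;> omega

theorem cyclePattern_lt {n a b : ℕ} (hab : a < b) (hb : b < n)
    (h : cyclePattern n a = cyclePattern n b) :
    cyclePattern n a < b - a ∧ cyclePattern n a < n - (b - a) := by
  unfold cyclePattern blockPattern at h ⊢
  split_ifs at h ⊢ <;> omega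

theorem isCyclicPacking_cyclePattern {n : ℕ} :
    IsCyclicPacking (fun v : Fin n => cyclePattern n v.val) :=
  isCyclicPacking_of_lt fun _ _ hab hb h => cyclePattern_lt hab hb h

theorem cutPattern_bounds (n t : ℕ) : 1 ≤ cutPattern n t ∧ cutPattern n t ≤ 3 := by
  unfold cutPattern blockPattern
  split_ifs <;> omega

theorem cutPattern_lt {n a b : ℕ} (hab : a < b) (hb : b ≤ n)
    (h : cutPattern n a = cutPattern n b) : cutPattern n a < b - a := by
  unfold cutPattern blockPattern at h ⊢
  split_ifs at h ⊢ <;> omega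

theorem cutPattern_self {n : ℕ} (hn : 2 ≤ n) : cutPattern n n = cutPattern n 0 := by
  unfold cutPattern blockPattern
  split_ifs <;> omega

section Colorings

variable {n : ℕ} [NeZero n] {A : Fin n → Fin n → Prop}

theorem exists_isSource (hn : 2 ≤ n) (hA : IsOrientation (cycleGraph n) A)
    (h : ¬ ((∀ i : Fin n, A i (i + 1)) ∨ (∀ i : Fin n, A (i + 1) i))) :
    ∃ s, IsSource A s := by
  have arc (i : Fin n) : A i (i + 1) ∨ A (i + 1) i := (hA.2 _ _).1 (cycleGraph_adj_add_one hn i)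
  rw [not_or, not_forall, not_forall] at h
  obtain ⟨⟨i, hi⟩, ⟨j, hj⟩⟩ := h
  -- the first forward arc after the backward arc `i + 1 → i` starts at a source
  obtain ⟨t, hbwd, hfwd⟩ := Nat.exists_not_and_succ_of_not_zero_of_exists
    (p := fun t : ℕ => A (i + t) (i + t + 1)) (by simpa using hi)
    ⟨(j - i).val, by simpa using (arc j).resolve_right hj⟩
  obtain ⟨s, hs⟩ : ∃ s, s = i + ((t + 1 : ℕ) : Fin n) := ⟨_, rfl⟩
  replace hfwd : A s (s + 1) := hs ▸ hfwd
  replace hbwd : A s (s - 1) := by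
    have := (arc (i + t)).resolve_left hbwd
    rwa [show i + t + 1 = s by rw [hs]; push_cast; ring,
      show i + t = s - 1 by rw [hs]; push_cast; ring] at this
  refine ⟨s, fun u hu => ?_⟩
  rcases eq_add_one_or_eq_sub_one_of_cycleGraph_adj ((hA.2 u s).2 (Or.inl hu)) with rfl | rfl
  · exact hA.1 _ _ hu (by simpa using hbwd)
  · exact hA.1 _ _ hu (by simpa using hfwd)

theorem exists_isDPackingColoring_four (hA : IsOrientation (cycleGraph n) A) :
    ∃ c, IsDPackingColoring A 4 c :=
  ⟨_, isCyclicPacking_cyclePattern.isDPackingColoring hA fun v => cyclePattern_bounds n v.val⟩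

theorem exists_isDPackingColoring_three (hn : 3 ≤ n) (hA : IsOrientation (cycleGraph n) A)
    (h : ¬ (((∀ i : Fin n, A i (i + 1)) ∨ (∀ i : Fin n, A (i + 1) i)) ∧
      5 ≤ n ∧ n % 4 ≠ 0)) :
    ∃ c, IsDPackingColoring A 3 c := by
  by_cases h4 : n % 4 = 0
  · exact ⟨_, isCyclicPacking_cyclePattern.isDPackingColoring hA
      fun v => ⟨(cyclePattern_bounds n v.val).1, cyclePattern_le_three h4 v.val⟩⟩
  by_cases hdir : (∀ i : Fin n, A i (i + 1)) ∨ (∀ i : Fin n, A (i + 1) i)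
  · obtain rfl : n = 3 := by
      by_contra h3
      exact h ⟨hdir, by omega, h4⟩
    refine ⟨fun v => v.val + 1, (isCyclicPacking_of_injective ?_).isDPackingColoring hA
      fun v => ⟨by omega, by omega⟩⟩
    exact fun u v huv => Fin.ext (by omega)
  · obtain ⟨s, hs⟩ := exists_isSource (by omega) hA hdir
    exact ⟨_, hs.isDPackingColoring hA (cutPattern_bounds n) (fun _ _ => cutPattern_lt)
      (cutPattern_self (by omega))⟩

end Colorings

theorem dpacking_oriented_cycle (n : ℕ) (hn : 3 ≤ n) (A : Fin n → Fin n → Prop)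
    (hA : IsOrientation (cycleGraph n) A) :
    2 ≤ dPackingChromaticNumber A ∧ dPackingChromaticNumber A ≤ 4 ∧
    (dPackingChromaticNumber A = 4 ↔
      (((∀ i : Fin n, A i (i + ⟨1, by omega⟩)) ∨ (∀ i : Fin n, A (i + ⟨1, by omega⟩) i)) ∧
        5 ≤ n ∧ n % 4 ≠ 0)) := by
  have : NeZero n := ⟨by omega⟩
  have hone : (⟨1, by omega⟩ : Fin n) = 1 := Fin.ext (Nat.mod_eq_of_lt (by omega)).symm
  simp only [hone]
  have h4 := exists_isDPackingColoring_four hA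
  refine ⟨hA.two_le_dPackingChromaticNumber (cycleGraph_adj_add_one (by omega) 0) ⟨4, h4⟩,
    Nat.sInf_le h4, ?_⟩
  rw [dPackingChromaticNumber_eq_succ_iff h4]
  constructor
  · intro hno
    by_contra h
    exact hno (exists_isDPackingColoring_three hn hA h)
  · rintro ⟨hdir, hn5, hn4⟩ ⟨c, hc⟩
    exact (hc.isCyclicPacking hdir).false_of_le_three hc.1 hn5 hn4
end

section
/- For every orientation T⃗ of a tree T, the packing chromatic number of T⃗ is at most 3. -/
open SimpleGraph

/-!
Root the tree and let `φ v` be the number of forward minus backward arcs on the tree path from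
the root to `v`. Every arc `u → v` then satisfies `φ v = φ u + 1`, so a directed path of length
`n` raises `φ` by exactly `n`. Colour `v` by `φ v mod 4` with the pattern `1, 2, 1, 3`: two
vertices of colour 1 have an even nonzero height difference, two of colour 2 or 3 a nonzero
multiple of 4.
-/

namespace SimpleGraph

variable {V : Type*} {G : SimpleGraph V}

def Walk.dartSum (g : V → V → ℤ) {u v : V} (p : G.Walk u v) : ℤ :=
  (p.darts.map fun d => g d.fst d.snd).sum

@[simp]
theorem Walk.dartSum_concat (g : V → V → ℤ) {u v w : V} (p : G.Walk u v) (h : G.Adj v w) :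
    (p.concat h).dartSum g = p.dartSum g + g v w := by
  simp [dartSum, darts_concat]

theorem IsAcyclic.concat_isPath_or_eq_concat (hG : G.IsAcyclic) {r u v : V} {p : G.Walk r u}
    (hp : p.IsPath) (h : G.Adj u v) :
    (p.concat h).IsPath ∨ ∃ q : G.Walk r v, q.IsPath ∧ p = q.concat h.symm := by
  classical
  by_cases hv : v ∈ p.support
  · have hdrop : p.dropUntil v hv = h.symm.toWalk := congrArg Subtype.val <|
      (hG.subsingleton_path v u).elim ⟨_, hp.dropUntil hv⟩ ⟨_, .of_adj h.symm⟩
    refine .inr ⟨p.takeUntil v hv, hp.takeUntil hv, ?_⟩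
    rw [Walk.concat_eq_append, ← Adj.toWalk, ← hdrop, Walk.take_spec]
  · exact .inl (hp.concat hv h)

theorem IsTree.exists_potential (hG : G.IsTree) (g : V → V → ℤ)
    (hg : ∀ u v, G.Adj u v → g v u = -g u v) :
    ∃ φ : V → ℤ, ∀ u v, G.Adj u v → φ v = φ u + g u v := by
  obtain ⟨r⟩ := hG.connected.nonempty
  choose P hP hPuniq using hG.existsUnique_path r
  refine ⟨fun v => (P v).dartSum g, fun u v h => ?_⟩
  dsimp only
  rcases hG.isAcyclic.concat_isPath_or_eq_concat (hP u) h with hpath | ⟨q, hq, hPu⟩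
  · rw [← hPuniq v _ hpath, Walk.dartSum_concat]
  · rw [hPu, hPuniq v q hq, Walk.dartSum_concat, hg u v h]
    ring

end SimpleGraph

def heightColor (z : ℤ) : ℕ := if z % 2 = 0 then 1 else if z % 4 = 1 then 2 else 3

theorem heightColor_mem_Icc (z : ℤ) : heightColor z ∈ Set.Icc 1 3 := by
  unfold heightColor
  split_ifs <;> simp

theorem heightColor_lt_of_heightColor_add_eq {z : ℤ} {n : ℕ} (hn : n ≠ 0)
    (h : heightColor (z + n) = heightColor z) : heightColor z < n := by
  unfold heightColor at *
  split_ifs at h ⊢ <;> omega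

def IsHeight {V : Type*} (A : V → V → Prop) (φ : V → ℤ) : Prop := ∀ u v, A u v → φ v = φ u + 1

section Height

variable {V : Type*} {A : V → V → Prop} {φ : V → ℤ}

theorem IsOrientation.exists_height {T : SimpleGraph V} (hT : T.IsTree)
    (hA : IsOrientation T A) : ∃ φ, IsHeight A φ := by
  classical
  obtain ⟨φ, hφ⟩ := hT.exists_potential (fun u v => if A u v then 1 else -1) fun u v huv => by
    rcases (hA.2 u v).1 huv with h | h <;> simp [h, hA.1 _ _ h]
  exact ⟨φ, fun u v h => by simpa [h] using hφ u v ((hA.2 u v).2 (.inl h))⟩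

theorem IsHeight.eq_add_of_dPath (hφ : IsHeight A φ) :
    ∀ {n : ℕ} {u v : V}, DPath A n u v → φ v = φ u + n
  | 0, _, _, rfl => by simp
  | n + 1, u, _, ⟨w, huw, hwv⟩ => by
    rw [hφ.eq_add_of_dPath hwv, hφ u w huw]
    push_cast
    ring

theorem lt_wdist {u v : V} {m : ℕ} (H : ∀ n : ℕ, DPath A n u v ∨ DPath A n v u → m < n) :
    (m : ℕ∞) < wdist A u v := by
  refine (ENat.add_one_le_iff (ENat.natCast_ne_top m)).1 (le_sInf ?_)
  rintro _ ⟨n, rfl, hn⟩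
  exact_mod_cast H n hn

theorem IsHeight.isDPackingColoring_heightColor (hφ : IsHeight A φ) :
    IsDPackingColoring A 3 (heightColor ∘ φ) := by
  refine ⟨fun v => heightColor_mem_Icc (φ v), fun u v huv hc => lt_wdist ?_⟩
  rintro n (h | h)
  · refine heightColor_lt_of_heightColor_add_eq (by rintro rfl; exact huv h) ?_
    simpa [← hφ.eq_add_of_dPath h] using hc.symm
  · rw [hc]
    refine heightColor_lt_of_heightColor_add_eq (by rintro rfl; exact huv h.symm) ?_
    simpa [← hφ.eq_add_of_dPath h] using hc

end Height

theorem dpacking_oriented_tree_general {V : Type*} (T : SimpleGraph V)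
    (hT : T.IsTree) (A : V → V → Prop) (hA : IsOrientation T A) :
    dPackingChromaticNumber A ≤ 3 :=
  let ⟨_, hφ⟩ := hA.exists_height hT
  Nat.sInf_le ⟨_, hφ.isDPackingColoring_heightColor⟩

theorem dpacking_oriented_tree {V : Type*} [Fintype V] (T : SimpleGraph V)
    (hT : T.IsTree) (A : V → V → Prop) (hA : IsOrientation T A) :
    dPackingChromaticNumber A ≤ 3 :=
  dpacking_oriented_tree_general T hT A hA
end
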